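/- arXiv:1604.04090 — 2 statements merged into one kernel-verified Lean document; each statement's English description precedes it below -/
import Mathlib

section
/- Let (H,β) be a Hom-bialgebra and (A,▷,α) an (H,β)-module Hom-algebra. The map R: H⊗A → A⊗H, R(h⊗a) = h₁▷a ⊗ h₂, satisfies condition (C2): α(a)_R⊗(hh')_R = a_{Rr}⊗β⁻¹(β(h)_r)h'_R; explicitly, (hh')₁▷α(a)⊗(hh')₂ = β(h)₁▷(h'₁▷a) ⊗ β⁻¹(β(h)₂)h'₂. -/
open TensorProduct

noncomputable section

namespace HomPaper

variable (K : Type) [Field K]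
variable {A B C D H M : Type}
variable [AddCommGroup A] [Module K A] [AddCommGroup B] [Module K B]
variable [AddCommGroup C] [Module K C] [AddCommGroup D] [Module K D]
variable [AddCommGroup H] [Module K H] [AddCommGroup M] [Module K M]

/-- `pairT f g t` pairs a tensor `t = Σ x ⊗ y` against two functionals: `Σ f x * g y`. -/
def pairT (f : A →ₗ[K] K) (g : B →ₗ[K] K) : A ⊗[K] B →ₗ[K] K :=
  (TensorProduct.lid K K).toLinearMap ∘ₗ TensorProduct.map f g

/-- `contract4 p q` sends `(a ⊗ b, c ⊗ d)` to `p a c * q b d` (with implicit summation). -/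
def contract4 (p : A →ₗ[K] C →ₗ[K] K) (q : B →ₗ[K] D →ₗ[K] K) :
    A ⊗[K] B →ₗ[K] C ⊗[K] D →ₗ[K] K :=
  TensorProduct.curry ((TensorProduct.lid K K).toLinearMap ∘ₗ
    TensorProduct.map (TensorProduct.lift p) (TensorProduct.lift q) ∘ₗ
    (TensorProduct.tensorTensorTensorComm K A B C D).toLinearMap)

/-- componentwise multiplication on a tensor product of two algebras:
`(a ⊗ b)(a' ⊗ b') = aa' ⊗ bb'`. -/
def tmul2 (mA : A →ₗ[K] A →ₗ[K] A) (mB : B →ₗ[K] B →ₗ[K] B) :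
    A ⊗[K] B →ₗ[K] A ⊗[K] B →ₗ[K] A ⊗[K] B :=
  TensorProduct.curry ((TensorProduct.map (TensorProduct.lift mA) (TensorProduct.lift mB)) ∘ₗ
    (TensorProduct.tensorTensorTensorComm K A B A B).toLinearMap)

/-- the tensor product comultiplication `Δ(c ⊗ d) = (c₁ ⊗ d₁) ⊗ (c₂ ⊗ d₂)`. -/
def tcomul (dA : A →ₗ[K] A ⊗[K] A) (dB : B →ₗ[K] B ⊗[K] B) :
    A ⊗[K] B →ₗ[K] (A ⊗[K] B) ⊗[K] (A ⊗[K] B) :=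
  (TensorProduct.tensorTensorTensorComm K A A B B).toLinearMap ∘ₗ TensorProduct.map dA dB

/-- the tensor product counit `ε(c ⊗ d) = ε(c)ε(d)`. -/
def tcounit (eA : A →ₗ[K] K) (eB : B →ₗ[K] K) : A ⊗[K] B →ₗ[K] K := pairT K eA eB

/-- The `R`-smash product multiplication
`(a ⊗ b)(a' ⊗ b') = a·α⁻¹(a')_R ⊗ β⁻¹(b_R)·b'`, where `R(b ⊗ a) = a_R ⊗ b_R`. -/
def smashMul (mA : A →ₗ[K] A →ₗ[K] A) (mB : B →ₗ[K] B →ₗ[K] B)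
    (α : A ≃ₗ[K] A) (β : B ≃ₗ[K] B) (R : B ⊗[K] A →ₗ[K] A ⊗[K] B) :
    A ⊗[K] B →ₗ[K] A ⊗[K] B →ₗ[K] A ⊗[K] B :=
  TensorProduct.curry
    ((TensorProduct.map (TensorProduct.lift mA) (TensorProduct.lift mB)) ∘ₗ
     (TensorProduct.assoc K A A (B ⊗[K] B)).symm.toLinearMap ∘ₗ
     (TensorProduct.map LinearMap.id (TensorProduct.assoc K A B B).toLinearMap) ∘ₗ
     (TensorProduct.map LinearMap.id (TensorProduct.map
        ((TensorProduct.map LinearMap.id β.symm.toLinearMap) ∘ₗ R ∘ₗ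
         (TensorProduct.map LinearMap.id α.symm.toLinearMap)) LinearMap.id)) ∘ₗ
     (TensorProduct.map LinearMap.id (TensorProduct.assoc K B A B).symm.toLinearMap) ∘ₗ
     (TensorProduct.assoc K A B (A ⊗[K] B)).toLinearMap)

/-- The antipode of the `R`-smash product:
`S̄(a ⊗ b) = α⁻¹(S_A(a))_R ⊗ β⁻¹(S_B(b)_R)`. -/
def smashS (α : A ≃ₗ[K] A) (β : B ≃ₗ[K] B) (SA : A →ₗ[K] A) (SB : B →ₗ[K] B)
    (R : B ⊗[K] A →ₗ[K] A ⊗[K] B) : A ⊗[K] B →ₗ[K] A ⊗[K] B :=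
  (TensorProduct.map LinearMap.id β.symm.toLinearMap) ∘ₗ R ∘ₗ
  (TensorProduct.map SB (α.symm.toLinearMap ∘ₗ SA)) ∘ₗ (TensorProduct.comm K A B).toLinearMap

/-- the twisting condition (4): `R(β(b) ⊗ α(a)) = (α ⊗ β)(R(b ⊗ a))`. -/
def RTwist (α : A ≃ₗ[K] A) (β : B ≃ₗ[K] B) (R : B ⊗[K] A →ₗ[K] A ⊗[K] B) : Prop :=
  ∀ (a : A) (b : B),
    R (β b ⊗ₜ[K] α a) = TensorProduct.map α.toLinearMap β.toLinearMap (R (b ⊗ₜ[K] a))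

/-- condition (C1): `a_R ⊗ (1_B)_R = α(a) ⊗ 1_B` and `(1_A)_R ⊗ b_R = 1_A ⊗ β(b)`. -/
def RC1 (oneA : A) (oneB : B) (α : A ≃ₗ[K] A) (β : B ≃ₗ[K] B)
    (R : B ⊗[K] A →ₗ[K] A ⊗[K] B) : Prop :=
  (∀ a : A, R (oneB ⊗ₜ[K] a) = α a ⊗ₜ[K] oneB) ∧
  (∀ b : B, R (b ⊗ₜ[K] oneA) = oneA ⊗ₜ[K] β b)

/-- condition (C2): `α(a)_R ⊗ (bb')_R = a_{Rr} ⊗ β⁻¹(β(b)_r)b'_R`. -/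
def RC2 (mB : B →ₗ[K] B →ₗ[K] B) (α : A ≃ₗ[K] A) (β : B ≃ₗ[K] B)
    (R : B ⊗[K] A →ₗ[K] A ⊗[K] B) : Prop :=
  ∀ (a : A) (b b' : B),
    R (mB b b' ⊗ₜ[K] α a) =
      ((TensorProduct.map LinearMap.id (TensorProduct.lift mB)) ∘ₗ
       (TensorProduct.assoc K A B B).toLinearMap ∘ₗ
       (TensorProduct.map (TensorProduct.map LinearMap.id β.symm.toLinearMap) LinearMap.id) ∘ₗ
       (TensorProduct.map (R ∘ₗ TensorProduct.mk K B A (β b)) LinearMap.id))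
        (R (b' ⊗ₜ[K] a))

/-- condition (C3): `α((aa')_R) ⊗ β(b)_R = α(a_R)·α(a')_r ⊗ b_{Rr}`. -/
def RC3 (mA : A →ₗ[K] A →ₗ[K] A) (α : A ≃ₗ[K] A) (β : B ≃ₗ[K] B)
    (R : B ⊗[K] A →ₗ[K] A ⊗[K] B) : Prop :=
  ∀ (a a' : A) (b : B),
    TensorProduct.map α.toLinearMap LinearMap.id (R (β b ⊗ₜ[K] mA a a')) =
      ((TensorProduct.map (TensorProduct.lift mA) LinearMap.id) ∘ₗ
       (TensorProduct.assoc K A A B).symm.toLinearMap ∘ₗ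
       (TensorProduct.map α.toLinearMap (R ∘ₗ (TensorProduct.mk K B A).flip (α a'))))
        (R (b ⊗ₜ[K] a))

/-- A Hom-algebra: `α` multiplicative and unital, Hom-associativity, Hom-unitality. -/
structure IsHomAlgebra (mul : A →ₗ[K] A →ₗ[K] A) (one : A) (α : A ≃ₗ[K] A) : Prop where
  map_mul : ∀ a b : A, α (mul a b) = mul (α a) (α b)
  map_one : α one = one
  hom_assoc : ∀ a b c : A, mul (α a) (mul b c) = mul (mul a b) (α c)
  mul_one : ∀ a : A, mul a one = α a
  one_mul : ∀ a : A, mul one a = α a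

/-- A Hom-coalgebra: `Δ∘α = (α⊗α)∘Δ`, `ε∘α = ε`, Hom-coassociativity
`α(c₁) ⊗ c₂₁ ⊗ c₂₂ = c₁₁ ⊗ c₁₂ ⊗ α(c₂)`, and counit identities `ε(c₁)c₂ = c₁ε(c₂) = α(c)`. -/
structure IsHomCoalgebra (comul : C →ₗ[K] C ⊗[K] C) (counit : C →ₗ[K] K)
    (α : C ≃ₗ[K] C) : Prop where
  comul_map : ∀ c : C,
    comul (α c) = TensorProduct.map α.toLinearMap α.toLinearMap (comul c)
  counit_map : ∀ c : C, counit (α c) = counit c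
  hom_coassoc : ∀ c : C,
    TensorProduct.map α.toLinearMap comul (comul c) =
      (TensorProduct.assoc K C C C) (TensorProduct.map comul α.toLinearMap (comul c))
  counit_left : ∀ c : C,
    TensorProduct.lid K C (TensorProduct.map counit LinearMap.id (comul c)) = α c
  counit_right : ∀ c : C,
    TensorProduct.rid K C (TensorProduct.map LinearMap.id counit (comul c)) = α c

/-- A Hom-bialgebra: simultaneously a Hom-algebra and Hom-coalgebra such that
`Δ` and `ε` are morphisms of Hom-algebras. -/
structure IsHomBialgebra (mul : H →ₗ[K] H →ₗ[K] H) (one : H)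
    (comul : H →ₗ[K] H ⊗[K] H) (counit : H →ₗ[K] K) (β : H ≃ₗ[K] H) : Prop where
  alg : IsHomAlgebra K mul one β
  coalg : IsHomCoalgebra K comul counit β
  comul_mul : ∀ a b : H, comul (mul a b) = tmul2 K mul mul (comul a) (comul b)
  comul_one : comul one = one ⊗ₜ[K] one
  counit_mul : ∀ a b : H, counit (mul a b) = counit a * counit b
  counit_one : counit one = 1

/-- A Hom-Hopf algebra: a Hom-bialgebra with antipode `S`:
`S(h₁)h₂ = h₁S(h₂) = ε(h)1` and `S∘β = β∘S`. -/
structure IsHomHopf (mul : H →ₗ[K] H →ₗ[K] H) (one : H)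
    (comul : H →ₗ[K] H ⊗[K] H) (counit : H →ₗ[K] K) (β : H ≃ₗ[K] H)
    (S : H →ₗ[K] H) : Prop where
  bialg : IsHomBialgebra K mul one comul counit β
  S_left : ∀ h : H,
    TensorProduct.lift mul (TensorProduct.map S LinearMap.id (comul h)) = counit h • one
  S_right : ∀ h : H,
    TensorProduct.lift mul (TensorProduct.map LinearMap.id S (comul h)) = counit h • one
  S_map : ∀ h : H, S (β h) = β (S h)

/-- `(A,▷,α)` is an `(H,β)`-module Hom-algebra. -/
structure IsModuleHomAlgebra
    (Hmul : H →ₗ[K] H →ₗ[K] H) (Hone : H) (Hcomul : H →ₗ[K] H ⊗[K] H)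
    (Hcounit : H →ₗ[K] K) (β : H ≃ₗ[K] H)
    (Amul : A →ₗ[K] A →ₗ[K] A) (Aone : A) (α : A ≃ₗ[K] A)
    (act : H →ₗ[K] A →ₗ[K] A) : Prop where
  act_map : ∀ (h : H) (a : A), α (act h a) = act (β h) (α a)
  act_act : ∀ (h h' : H) (a : A), act (β h) (act h' a) = act (Hmul h h') (α a)
  one_act : ∀ a : A, act Hone a = α a
  act_mul : ∀ (h : H) (a a' : A),
    act (β (β h)) (Amul a a') =
      TensorProduct.lift Amul
        (TensorProduct.map (act.flip a) (act.flip a') (Hcomul h))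
  act_one : ∀ h : H, act h Aone = Hcounit h • Aone

/-- the map `R(h ⊗ a) = (h₁ ▷ a) ⊗ h₂` induced by a module action. -/
def actR (Hcomul : H →ₗ[K] H ⊗[K] H) (act : H →ₗ[K] A →ₗ[K] A) :
    H ⊗[K] A →ₗ[K] A ⊗[K] H :=
  (TensorProduct.map (TensorProduct.lift act) LinearMap.id) ∘ₗ
  (TensorProduct.assoc K H A H).symm.toLinearMap ∘ₗ
  (TensorProduct.map LinearMap.id (TensorProduct.comm K H A).toLinearMap) ∘ₗ
  (TensorProduct.assoc K H H A).toLinearMap ∘ₗ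
  (TensorProduct.map Hcomul LinearMap.id)

/-- `σ` is a Hom-cobraiding form: axioms (CHA1)-(CHA5). -/
structure IsCobraiding (mul : M →ₗ[K] M →ₗ[K] M) (one : M)
    (comul : M →ₗ[K] M ⊗[K] M) (counit : M →ₗ[K] K) (γ : M ≃ₗ[K] M)
    (σ : M →ₗ[K] M →ₗ[K] K) : Prop where
  cha1_left : ∀ x : M, σ x one = counit x
  cha1_right : ∀ x : M, σ one x = counit x
  cha2 : ∀ x y z : M, σ (mul x y) (γ z) = pairT K (σ (γ x)) (σ (γ y)) (comul z)
  cha3 : ∀ x y z : M, σ (γ x) (mul y z) = pairT K (σ.flip (γ z)) (σ.flip (γ y)) (comul x)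
  cha4 : ∀ x y : M,
    ((TensorProduct.lid K M).toLinearMap ∘ₗ
      TensorProduct.map (TensorProduct.lift σ) (TensorProduct.lift mul) ∘ₗ
      (TensorProduct.tensorTensorTensorComm K M M M M).toLinearMap)
        (comul x ⊗ₜ[K] comul y) =
    ((TensorProduct.rid K M).toLinearMap ∘ₗ
      TensorProduct.map (TensorProduct.lift mul.flip) (TensorProduct.lift σ) ∘ₗ
      (TensorProduct.tensorTensorTensorComm K M M M M).toLinearMap)
        (comul x ⊗ₜ[K] comul y)
  cha5 : ∀ x y : M, σ (γ x) (γ y) = σ x y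

/-- `θ` is a Hom-skew pairing: axioms (SP1)-(SP4). -/
structure IsSkewPairing
    (Amul : A →ₗ[K] A →ₗ[K] A) (Aone : A) (Acomul : A →ₗ[K] A ⊗[K] A)
    (Acounit : A →ₗ[K] K) (α : A ≃ₗ[K] A)
    (Bmul : B →ₗ[K] B →ₗ[K] B) (Bone : B) (Bcomul : B →ₗ[K] B ⊗[K] B)
    (Bcounit : B →ₗ[K] K) (β : B ≃ₗ[K] B)
    (θ : A →ₗ[K] B →ₗ[K] K) : Prop where
  sp1_left : ∀ a : A, θ a Bone = Acounit a
  sp1_right : ∀ b : B, θ Aone b = Bcounit b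
  sp2 : ∀ (a a' : A) (b : B),
    θ (Amul a a') (β b) = pairT K (θ (α a)) (θ (α a')) (Bcomul b)
  sp3 : ∀ (a : A) (b b' : B),
    θ (α a) (Bmul b b') = pairT K (θ.flip (β b')) (θ.flip (β b)) (Acomul a)
  sp4 : ∀ (a : A) (b : B), θ (α a) (β b) = θ a b

def Gmap (act : H →ₗ[K] A →ₗ[K] A) : (H ⊗[K] H) ⊗[K] A →ₗ[K] A ⊗[K] H :=
  (TensorProduct.map (TensorProduct.lift act) LinearMap.id) ∘ₗ
  (TensorProduct.assoc K H A H).symm.toLinearMap ∘ₗ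
  (TensorProduct.map LinearMap.id (TensorProduct.comm K H A).toLinearMap) ∘ₗ
  (TensorProduct.assoc K H H A).toLinearMap

lemma Gmap_tmul (act : H →ₗ[K] A →ₗ[K] A) (h₁ h₂ : H) (a : A) :
    Gmap K act ((h₁ ⊗ₜ[K] h₂) ⊗ₜ[K] a) = act h₁ a ⊗ₜ[K] h₂ := by
  simp [Gmap]

lemma actR_apply (Hcomul : H →ₗ[K] H ⊗[K] H) (act : H →ₗ[K] A →ₗ[K] A) (h : H) (a : A) :
    actR K Hcomul act (h ⊗ₜ[K] a) = Gmap K act (Hcomul h ⊗ₜ[K] a) := by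
  simp [actR, Gmap]

lemma tmul2_tmul (mA : A →ₗ[K] A →ₗ[K] A) (mB : B →ₗ[K] B →ₗ[K] B)
    (a a' : A) (b b' : B) :
    tmul2 K mA mB (a ⊗ₜ[K] b) (a' ⊗ₜ[K] b') = mA a a' ⊗ₜ[K] mB b b' := by
  simp [tmul2]

/-- the induced map `R(h ⊗ a) = h₁ ▷ a ⊗ h₂` satisfies condition (C2). -/
theorem actR_C2
    (Hmul : H →ₗ[K] H →ₗ[K] H) (Hone : H) (Hcomul : H →ₗ[K] H ⊗[K] H)
    (Hcounit : H →ₗ[K] K) (β : H ≃ₗ[K] H)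
    (Amul : A →ₗ[K] A →ₗ[K] A) (Aone : A) (α : A ≃ₗ[K] A)
    (act : H →ₗ[K] A →ₗ[K] A)
    (hH : IsHomBialgebra K Hmul Hone Hcomul Hcounit β)
    (hA : IsHomAlgebra K Amul Aone α)
    (hact : IsModuleHomAlgebra K Hmul Hone Hcomul Hcounit β Amul Aone α act) :
    RC2 K Hmul α β (actR K Hcomul act) := by
  intro a b b'
  rw [actR_apply, actR_apply, hH.comul_mul]
  generalize Hcomul b' = v
  induction v using TensorProduct.induction_on with
  | zero => simp
  | add x y hx hy =>
      simp only [map_add, LinearMap.add_apply, TensorProduct.add_tmul, LinearMap.map_add] at *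
      rw [hx, hy]
  | tmul y₁ y₂ =>
      rw [Gmap_tmul]
      simp only [LinearMap.comp_apply, TensorProduct.map_tmul, LinearMap.id_coe, id_eq,
        TensorProduct.mk_apply]
      rw [actR_apply, hH.coalg.comul_map]
      generalize Hcomul b = u
      induction u using TensorProduct.induction_on with
      | zero => simp
      | add x y hx hy =>
          simp only [map_add, LinearMap.add_apply, TensorProduct.add_tmul, LinearMap.map_add] at *
          rw [hx, hy]
      | tmul x₁ x₂ =>
          rw [tmul2_tmul, Gmap_tmul]
          simp only [TensorProduct.map_tmul, Gmap_tmul, LinearMap.comp_apply,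
            LinearEquiv.coe_coe, LinearMap.id_coe, id_eq, TensorProduct.assoc_tmul,
            LinearEquiv.symm_apply_apply, TensorProduct.lift.tmul]
          rw [hact.act_act]


end HomPaper
end
end

section
/- Let (A,α,S_A) and (B,β,S_B) be Hom-Hopf algebras and (A♮_R B, α⊗β) an R-smash product Hom-bialgebra (i.e., R is additionally a coalgebra map). Then A♮_R B is a Hom-Hopf algebra with antipode S̄(a⊗b) = α⁻¹(S_A(a))_R ⊗ β⁻¹(S_B(b)_R); that is, S̄ satisfies S̄(y₁)y₂ = y₁S̄(y₂) = ε(y)(1_A⊗1_B) and S̄∘(α⊗β) = (α⊗β)∘S̄ for all y ∈ A♮_R B. -/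
open TensorProduct

noncomputable section

namespace HomPaper

variable (K : Type) [Field K]
variable {A B C D H M : Type}
variable [AddCommGroup A] [Module K A] [AddCommGroup B] [Module K B]
variable [AddCommGroup C] [Module K C] [AddCommGroup D] [Module K D]
variable [AddCommGroup H] [Module K H] [AddCommGroup M] [Module K M]

variable {mA : A →ₗ[K] A →ₗ[K] A} {oneA : A} {dA : A →ₗ[K] A ⊗[K] A} {eA : A →ₗ[K] K}
variable {α : A ≃ₗ[K] A} {SA : A →ₗ[K] A}
variable {mB : B →ₗ[K] B →ₗ[K] B} {oneB : B} {dB : B →ₗ[K] B ⊗[K] B} {eB : B →ₗ[K] K}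
variable {β : B ≃ₗ[K] B} {SB : B →ₗ[K] B}
variable {R : B ⊗[K] A →ₗ[K] A ⊗[K] B}

lemma smashMul_tmul (a a' : A) (b b' : B) :
    smashMul K mA mB α β R (a ⊗ₜ b) (a' ⊗ₜ b') =
      TensorProduct.map (mA a) ((mB.flip b') ∘ₗ β.symm.toLinearMap)
        (R (b ⊗ₜ[K] α.symm a')) := by
  simp only [smashMul, TensorProduct.curry_apply, LinearMap.comp_apply,
    LinearEquiv.coe_coe, TensorProduct.assoc_tmul, TensorProduct.map_tmul,
    LinearMap.id_coe, id_eq, TensorProduct.assoc_symm_tmul]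
  generalize R (b ⊗ₜ[K] α.symm a') = t
  induction t using TensorProduct.induction_on with
  | zero => simp
  | tmul x y => simp
  | add x y hx hy =>
      simp only [map_add, TensorProduct.add_tmul, TensorProduct.tmul_add, hx, hy,
        LinearMap.add_apply]

lemma smashS_tmul (a : A) (b : B) :
    smashS K α β SA SB R (a ⊗ₜ b) =
      TensorProduct.map LinearMap.id β.symm.toLinearMap
        (R (SB b ⊗ₜ[K] α.symm (SA a))) := by
  simp [smashS]
/-- auxiliary map for goal 1: `x ⊗ (b₁ ⊗ b₂) ↦ α(p) ⊗ m_B(β⁻¹(q), b₂)` where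
`p ⊗ q = R(S_B(b₁) ⊗ α⁻²(x))`. -/
def G1 (mB : B →ₗ[K] B →ₗ[K] B) (α : A ≃ₗ[K] A) (β : B ≃ₗ[K] B) (SB : B →ₗ[K] B)
    (R : B ⊗[K] A →ₗ[K] A ⊗[K] B) : A ⊗[K] (B ⊗[K] B) →ₗ[K] A ⊗[K] B :=
  TensorProduct.map α.toLinearMap (TensorProduct.lift (mB ∘ₗ β.symm.toLinearMap)) ∘ₗ
  (TensorProduct.assoc K A B B).toLinearMap ∘ₗ
  TensorProduct.map (R ∘ₗ TensorProduct.map SB (α.symm.toLinearMap ∘ₗ α.symm.toLinearMap) ∘ₗ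
    (TensorProduct.comm K A B).toLinearMap) LinearMap.id ∘ₗ
  (TensorProduct.assoc K A B B).symm.toLinearMap

lemma G1_eval {mB : B →ₗ[K] B →ₗ[K] B} {α : A ≃ₗ[K] A} {β : B ≃ₗ[K] B} {SB : B →ₗ[K] B}
    {R : B ⊗[K] A →ₗ[K] A ⊗[K] B} (x : A) (b₁ b₂ : B) :
    G1 K mB α β SB R (x ⊗ₜ (b₁ ⊗ₜ b₂)) =
      TensorProduct.map α.toLinearMap ((mB.flip b₂) ∘ₗ β.symm.toLinearMap)
        (R (SB b₁ ⊗ₜ[K] α.symm (α.symm x))) := by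
  simp only [G1, LinearMap.comp_apply, LinearEquiv.coe_coe, TensorProduct.assoc_symm_tmul,
    TensorProduct.map_tmul, TensorProduct.comm_tmul, LinearMap.id_coe, id_eq]
  generalize R (SB b₁ ⊗ₜ[K] α.symm (α.symm x)) = t
  induction t using TensorProduct.induction_on with
  | zero => simp
  | tmul p q => simp
  | add p q hp hq => simp only [map_add, TensorProduct.add_tmul, hp, hq]

/-- auxiliary map for goal 2: `(a₁ ⊗ a₂) ⊗ x ↦ m_A(a₁, p) ⊗ q` where
`p ⊗ q = R(β⁻¹(x) ⊗ α⁻¹(S_A(a₂)))`. -/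
def G2 (mA : A →ₗ[K] A →ₗ[K] A) (α : A ≃ₗ[K] A) (β : B ≃ₗ[K] B) (SA : A →ₗ[K] A)
    (R : B ⊗[K] A →ₗ[K] A ⊗[K] B) : (A ⊗[K] A) ⊗[K] B →ₗ[K] A ⊗[K] B :=
  TensorProduct.map (TensorProduct.lift mA) LinearMap.id ∘ₗ
  (TensorProduct.assoc K A A B).symm.toLinearMap ∘ₗ
  TensorProduct.map LinearMap.id (R ∘ₗ (TensorProduct.comm K A B).toLinearMap ∘ₗ
    TensorProduct.map (α.symm.toLinearMap ∘ₗ SA) β.symm.toLinearMap) ∘ₗ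
  (TensorProduct.assoc K A A B).toLinearMap

lemma G2_eval {mA : A →ₗ[K] A →ₗ[K] A} {α : A ≃ₗ[K] A} {β : B ≃ₗ[K] B} {SA : A →ₗ[K] A}
    {R : B ⊗[K] A →ₗ[K] A ⊗[K] B} (a₁ a₂ : A) (x : B) :
    G2 K mA α β SA R ((a₁ ⊗ₜ a₂) ⊗ₜ x) =
      TensorProduct.map (mA a₁) LinearMap.id (R (β.symm x ⊗ₜ[K] α.symm (SA a₂))) := by
  simp only [G2, LinearMap.comp_apply, LinearEquiv.coe_coe, TensorProduct.assoc_tmul,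
    TensorProduct.map_tmul, TensorProduct.comm_tmul, LinearMap.id_coe, id_eq]
  generalize R (β.symm x ⊗ₜ[K] α.symm (SA a₂)) = t
  induction t using TensorProduct.induction_on with
  | zero => simp
  | tmul p q => simp
  | add p q hp hq => simp only [map_add, TensorProduct.tmul_add, hp, hq]
section Main
variable {mA : A →ₗ[K] A →ₗ[K] A} {oneA : A} {α : A ≃ₗ[K] A} {SA : A →ₗ[K] A}
variable {mB : B →ₗ[K] B →ₗ[K] B} {oneB : B} {β : B ≃ₗ[K] B} {SB : B →ₗ[K] B}
variable {R : B ⊗[K] A →ₗ[K] A ⊗[K] B}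

lemma main1 (hR : RTwist K α β R) (hc3 : RC3 K mA α β R)
    (hmul' : ∀ x y : A, mA (α.symm x) (α.symm y) = α.symm (mA x y))
    (a₁ a₂ : A) (b₁ b₂ : B) :
    smashMul K mA mB α β R (smashS K α β SA SB R (a₁ ⊗ₜ b₁)) (a₂ ⊗ₜ b₂) =
      G1 K mB α β SB R (mA (SA a₁) a₂ ⊗ₜ (b₁ ⊗ₜ b₂)) := by
  rw [smashS_tmul]
  have e1 : R (SB b₁ ⊗ₜ[K] α.symm (SA a₁)) =
      TensorProduct.map α.toLinearMap β.toLinearMap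
        (R (β.symm (SB b₁) ⊗ₜ[K] α.symm (α.symm (SA a₁)))) := by
    have h := hR (α.symm (α.symm (SA a₁))) (β.symm (SB b₁))
    simpa using h
  rw [e1]
  set w := R (β.symm (SB b₁) ⊗ₜ[K] α.symm (α.symm (SA a₁))) with hw
  have e2 : TensorProduct.map LinearMap.id β.symm.toLinearMap
      (TensorProduct.map α.toLinearMap β.toLinearMap w) =
      TensorProduct.map α.toLinearMap LinearMap.id w := by
    induction w using TensorProduct.induction_on with
    | zero => simp
    | tmul u v => simp
    | add u v hu hv => simp only [map_add, hu, hv]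
  rw [e2]
  have claim : ∀ t : A ⊗[K] B,
      smashMul K mA mB α β R (TensorProduct.map α.toLinearMap LinearMap.id t) (a₂ ⊗ₜ[K] b₂) =
      TensorProduct.map LinearMap.id ((mB.flip b₂) ∘ₗ β.symm.toLinearMap)
        (((TensorProduct.map (TensorProduct.lift mA) LinearMap.id) ∘ₗ
          (TensorProduct.assoc K A A B).symm.toLinearMap ∘ₗ
          (TensorProduct.map α.toLinearMap
            (R ∘ₗ (TensorProduct.mk K B A).flip (α (α.symm (α.symm a₂)))))) t) := by
    intro t
    induction t using TensorProduct.induction_on with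
    | zero => simp
    | tmul u v =>
        simp only [TensorProduct.map_tmul, LinearMap.id_coe, id_eq, smashMul_tmul,
          LinearMap.comp_apply, LinearEquiv.coe_coe, LinearMap.flip_apply,
          TensorProduct.mk_apply, LinearEquiv.apply_symm_apply]
        generalize R (v ⊗ₜ[K] α.symm a₂) = s
        induction s using TensorProduct.induction_on with
        | zero => simp
        | tmul x y => simp
        | add x y hx hy => simp only [map_add, TensorProduct.tmul_add, hx, hy]
    | add u v hu hv => simp only [map_add, LinearMap.add_apply, hu, hv]
  rw [claim w, hw, ← hc3 (α.symm (α.symm (SA a₁))) (α.symm (α.symm a₂)) (β.symm (SB b₁))]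
  rw [hmul', hmul', G1_eval]
  simp only [LinearEquiv.apply_symm_apply]
  generalize R (SB b₁ ⊗ₜ[K] α.symm (α.symm (mA (SA a₁) a₂))) = s
  induction s using TensorProduct.induction_on with
  | zero => simp
  | tmul p q => simp
  | add p q hp hq => simp only [map_add, hp, hq]

lemma main2 (hR : RTwist K α β R) (hc2 : RC2 K mB α β R)
    (hmulB' : ∀ x y : B, mB (β.symm x) (β.symm y) = β.symm (mB x y))
    (a₁ a₂ : A) (b₁ b₂ : B) :
    smashMul K mA mB α β R (a₁ ⊗ₜ b₁) (smashS K α β SA SB R (a₂ ⊗ₜ b₂)) =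
      G2 K mA α β SA R ((a₁ ⊗ₜ a₂) ⊗ₜ mB b₁ (SB b₂)) := by
  rw [smashS_tmul]
  have e1 : R (SB b₂ ⊗ₜ[K] α.symm (SA a₂)) =
      TensorProduct.map α.toLinearMap β.toLinearMap
        (R (β.symm (SB b₂) ⊗ₜ[K] α.symm (α.symm (SA a₂)))) := by
    have h := hR (α.symm (α.symm (SA a₂))) (β.symm (SB b₂))
    simpa using h
  rw [e1]
  set w := R (β.symm (SB b₂) ⊗ₜ[K] α.symm (α.symm (SA a₂))) with hw
  have e2 : TensorProduct.map LinearMap.id β.symm.toLinearMap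
      (TensorProduct.map α.toLinearMap β.toLinearMap w) =
      TensorProduct.map α.toLinearMap LinearMap.id w := by
    induction w using TensorProduct.induction_on with
    | zero => simp
    | tmul u v => simp
    | add u v hu hv => simp only [map_add, hu, hv]
  rw [e2]
  have claim : ∀ t : A ⊗[K] B,
      smashMul K mA mB α β R (a₁ ⊗ₜ[K] b₁) (TensorProduct.map α.toLinearMap LinearMap.id t) =
      TensorProduct.map (mA a₁) LinearMap.id
        (((TensorProduct.map LinearMap.id (TensorProduct.lift mB)) ∘ₗ
          (TensorProduct.assoc K A B B).toLinearMap ∘ₗ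
          (TensorProduct.map (TensorProduct.map LinearMap.id β.symm.toLinearMap) LinearMap.id) ∘ₗ
          (TensorProduct.map (R ∘ₗ TensorProduct.mk K B A (β (β.symm b₁))) LinearMap.id)) t) := by
    intro t
    induction t using TensorProduct.induction_on with
    | zero => simp
    | tmul u v =>
        simp only [TensorProduct.map_tmul, LinearMap.id_coe, id_eq, smashMul_tmul,
          LinearMap.comp_apply, LinearEquiv.coe_coe, TensorProduct.mk_apply,
          LinearEquiv.symm_apply_apply, LinearEquiv.apply_symm_apply]
        generalize R (b₁ ⊗ₜ[K] u) = s
        induction s using TensorProduct.induction_on with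
        | zero => simp
        | tmul x y => simp
        | add x y hx hy => simp only [map_add, TensorProduct.add_tmul, hx, hy]
    | add u v hu hv => simp only [map_add, hu, hv]
  rw [claim w, hw, ← hc2 (α.symm (α.symm (SA a₂))) (β.symm b₁) (β.symm (SB b₂))]
  rw [hmulB', G2_eval]
  simp only [LinearEquiv.apply_symm_apply, LinearEquiv.symm_apply_apply]

end Main
/-- the R-smash product Hom-bialgebra is a Hom-Hopf algebra with antipode
`S̄(a ⊗ b) = α⁻¹(S_A(a))_R ⊗ β⁻¹(S_B(b)_R)`. -/
theorem rsmash_antipode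
    (mA : A →ₗ[K] A →ₗ[K] A) (oneA : A) (dA : A →ₗ[K] A ⊗[K] A) (eA : A →ₗ[K] K)
    (α : A ≃ₗ[K] A) (SA : A →ₗ[K] A)
    (mB : B →ₗ[K] B →ₗ[K] B) (oneB : B) (dB : B →ₗ[K] B ⊗[K] B) (eB : B →ₗ[K] K)
    (β : B ≃ₗ[K] B) (SB : B →ₗ[K] B)
    (hA : IsHomHopf K mA oneA dA eA α SA) (hB : IsHomHopf K mB oneB dB eB β SB)
    (R : B ⊗[K] A →ₗ[K] A ⊗[K] B)
    (hR : RTwist K α β R) (hc1 : RC1 K oneA oneB α β R)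
    (hc2 : RC2 K mB α β R) (hc3 : RC3 K mA α β R)
    (hRcomul : ∀ (a : A) (b : B),
      tcomul K dA dB (R (b ⊗ₜ[K] a)) =
        TensorProduct.map R R (tcomul K dB dA (b ⊗ₜ[K] a)))
    (hRcounit : ∀ (a : A) (b : B),
      tcounit K eA eB (R (b ⊗ₜ[K] a)) = eA a * eB b)
    (hbialg : IsHomBialgebra K (smashMul K mA mB α β R) (oneA ⊗ₜ[K] oneB)
      (tcomul K dA dB) (tcounit K eA eB) (TensorProduct.congr α β)) :
    (∀ y : A ⊗[K] B,
      TensorProduct.lift (smashMul K mA mB α β R)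
        (TensorProduct.map (smashS K α β SA SB R) LinearMap.id (tcomul K dA dB y)) =
        tcounit K eA eB y • (oneA ⊗ₜ[K] oneB)) ∧
    (∀ y : A ⊗[K] B,
      TensorProduct.lift (smashMul K mA mB α β R)
        (TensorProduct.map LinearMap.id (smashS K α β SA SB R) (tcomul K dA dB y)) =
        tcounit K eA eB y • (oneA ⊗ₜ[K] oneB)) ∧
    (∀ y : A ⊗[K] B,
      smashS K α β SA SB R (TensorProduct.congr α β y) =
        TensorProduct.congr α β (smashS K α β SA SB R y)) := by

  obtain ⟨hbA, hAleft, hAright, hAmap⟩ := hA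
  obtain ⟨hbB, hBleft, hBright, hBmap⟩ := hB
  have hmul' : ∀ x y : A, mA (α.symm x) (α.symm y) = α.symm (mA x y) := by
    intro x y
    apply α.injective
    rw [hbA.alg.map_mul]
    simp
  have hmulB' : ∀ x y : B, mB (β.symm x) (β.symm y) = β.symm (mB x y) := by
    intro x y
    apply β.injective
    rw [hbB.alg.map_mul]
    simp
  have honeA : α.symm oneA = oneA := by
    conv_lhs => rw [← hbA.alg.map_one]
    exact α.symm_apply_apply oneA
  have honeB : β.symm oneB = oneB := by
    conv_lhs => rw [← hbB.alg.map_one]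
    exact β.symm_apply_apply oneB
  have ht : ∀ (a : A) (b : B), tcomul K dA dB (a ⊗ₜ[K] b) =
      TensorProduct.tensorTensorTensorComm K A A B B (dA a ⊗ₜ[K] dB b) := by
    intro a b
    simp [tcomul]
  have hcount : ∀ (a : A) (b : B), tcounit K eA eB (a ⊗ₜ[K] b) = eA a * eB b := by
    intro a b
    simp [tcounit, pairT]
  refine ⟨?_, ?_, ?_⟩
  · -- S̄ * id = η∘ε
    have step : ∀ (ta : A ⊗[K] A) (tb : B ⊗[K] B),
        TensorProduct.lift (smashMul K mA mB α β R)
          (TensorProduct.map (smashS K α β SA SB R) LinearMap.id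
            (TensorProduct.tensorTensorTensorComm K A A B B (ta ⊗ₜ[K] tb))) =
        G1 K mB α β SB R ((TensorProduct.lift mA (TensorProduct.map SA LinearMap.id ta)) ⊗ₜ[K] tb) := by
      intro ta tb
      induction ta using TensorProduct.induction_on with
      | zero => simp
      | tmul a₁ a₂ =>
          induction tb using TensorProduct.induction_on with
          | zero => simp
          | tmul b₁ b₂ =>
              simpa using main1 K hR hc3 hmul' a₁ a₂ b₁ b₂
          | add x y hx hy => simp only [TensorProduct.tmul_add, map_add, hx, hy]
      | add x y hx hy => simp only [TensorProduct.add_tmul, map_add, hx, hy]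
    have step2 : ∀ tb : B ⊗[K] B, G1 K mB α β SB R (oneA ⊗ₜ[K] tb) =
        oneA ⊗ₜ[K] (TensorProduct.lift mB (TensorProduct.map SB LinearMap.id tb)) := by
      intro tb
      induction tb using TensorProduct.induction_on with
      | zero => simp
      | tmul b₁ b₂ =>
          rw [G1_eval, honeA, honeA, hc1.2 (SB b₁)]
          simp [hbA.alg.map_one]
      | add x y hx hy => simp only [TensorProduct.tmul_add, map_add, hx, hy]
    intro y
    induction y using TensorProduct.induction_on with
    | zero => simp
    | tmul a b =>
        rw [ht, step, hAleft, hcount, ← TensorProduct.smul_tmul', map_smul, step2, hBleft]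
        rw [TensorProduct.tmul_smul, smul_smul]
    | add x y hx hy =>
        simp only [map_add, hx, hy, add_smul]
  · -- id * S̄ = η∘ε
    have step : ∀ (ta : A ⊗[K] A) (tb : B ⊗[K] B),
        TensorProduct.lift (smashMul K mA mB α β R)
          (TensorProduct.map LinearMap.id (smashS K α β SA SB R)
            (TensorProduct.tensorTensorTensorComm K A A B B (ta ⊗ₜ[K] tb))) =
        G2 K mA α β SA R (ta ⊗ₜ[K] (TensorProduct.lift mB (TensorProduct.map LinearMap.id SB tb))) := by
      intro ta tb
      induction ta using TensorProduct.induction_on with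
      | zero => simp
      | tmul a₁ a₂ =>
          induction tb using TensorProduct.induction_on with
          | zero => simp
          | tmul b₁ b₂ =>
              simpa using main2 K hR hc2 hmulB' a₁ a₂ b₁ b₂
          | add x y hx hy => simp only [TensorProduct.tmul_add, map_add, hx, hy]
      | add x y hx hy => simp only [TensorProduct.add_tmul, map_add, hx, hy]
    have step2 : ∀ ta : A ⊗[K] A, G2 K mA α β SA R (ta ⊗ₜ[K] oneB) =
        (TensorProduct.lift mA (TensorProduct.map LinearMap.id SA ta)) ⊗ₜ[K] oneB := by
      intro ta
      induction ta using TensorProduct.induction_on with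
      | zero => simp
      | tmul a₁ a₂ =>
          rw [G2_eval, honeB, hc1.1 (α.symm (SA a₂))]
          simp
      | add x y hx hy => simp only [TensorProduct.add_tmul, map_add, hx, hy]
    intro y
    induction y using TensorProduct.induction_on with
    | zero => simp
    | tmul a b =>
        rw [ht, step, hBright, hcount, TensorProduct.tmul_smul, map_smul, step2, hAright]
        rw [← TensorProduct.smul_tmul', smul_smul, mul_comm (eB b)]
    | add x y hx hy =>
        simp only [map_add, hx, hy, add_smul]
  · -- S̄ ∘ (α ⊗ β) = (α ⊗ β) ∘ S̄
    intro y
    induction y using TensorProduct.induction_on with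
    | zero => simp
    | tmul a b =>
        rw [TensorProduct.congr_tmul, smashS_tmul, smashS_tmul, hBmap, hAmap]
        have e : α.symm (α (SA a)) = SA a := α.symm_apply_apply _
        rw [e]
        have e1 : R (β (SB b) ⊗ₜ[K] SA a) =
            TensorProduct.map α.toLinearMap β.toLinearMap (R (SB b ⊗ₜ[K] α.symm (SA a))) := by
          have h := hR (α.symm (SA a)) (SB b)
          simpa using h
        rw [e1]
        generalize R (SB b ⊗ₜ[K] α.symm (SA a)) = t
        induction t using TensorProduct.induction_on with
        | zero => simp
        | tmul x y => simp
        | add x y hx hy => simp only [map_add, hx, hy]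
    | add x y hx hy => simp only [map_add, hx, hy]
end HomPaper
end
end
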